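/- Final three-term theta vanishing identity: under the theta axioms, for all u, v, a, b, λ ∈ ℂ, one has ϑ(u−v−a+b)·ϑ(u−b+λ)·ϑ(v−a+λ)·ϑ(2λ) − ϑ(u−v−λ)·ϑ(u−a+2λ)·ϑ(v−b)·ϑ(a−b+λ) + ϑ(u−v+λ)·ϑ(u−a)·ϑ(v−b+2λ)·ϑ(a−b−λ) = 0. -/

import Mathlib

/-!
Each product `ϑ(u - α) ϑ(u - β)` is invariant under `u ↦ u + 1` and picks up a factor depending
only on `α + β` under `u ↦ u + τ`; in the three terms of the identity, viewed as a function `F`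
of `u`, this sum is always `v + a - λ`. Oddness of `ϑ` shows that `F` vanishes at `u = v + λ`,
`u = a - 2λ` and `u = a`. Dividing `F` by `ϑ(u - v - λ) ϑ(u - a + 2λ)`, whose zeros are simple
and lie at the lattice translates of the first two points, gives an entire elliptic function,
constant by Liouville's theorem, and zero by evaluation at `u = a`. This needs `λ` outside a
countable set; the general case follows by continuity in `λ`.
-/

open Complex Filter Function Set Topology
open scoped Real

noncomputable section

/-- The lattice `ℤ + τℤ` in `ℂ`. -/
def lattice (τ : ℂ) : Set ℂ := {z : ℂ | ∃ n m : ℤ, z = (n : ℂ) + (m : ℂ) * τ}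

section Lattice

variable {τ : ℂ}

theorem countable_lattice : (lattice τ).Countable := by
  refine (countable_range fun nm : ℤ × ℤ => (nm.1 : ℂ) + nm.2 * τ).mono ?_
  rintro _ ⟨n, m, rfl⟩
  exact ⟨(n, m), rfl⟩

theorem neg_mem_lattice {z : ℂ} (hz : z ∈ lattice τ) : -z ∈ lattice τ := by
  obtain ⟨n, m, rfl⟩ := hz
  exact ⟨-n, -m, by push_cast; ring⟩

theorem Function.Periodic.of_mem_lattice {α : Type*} {f : ℂ → α} (h1 : Periodic f 1)
    (hτ : Periodic f τ) {ω : ℂ} (hω : ω ∈ lattice τ) : Periodic f ω := by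
  obtain ⟨n, m, rfl⟩ := hω
  simpa using (h1.int_mul n).add_period (hτ.int_mul m)

theorem Differentiable.apply_eq_apply_of_periodic {E : Type*} [NormedAddCommGroup E]
    [NormedSpace ℂ E] (hτ : τ.im ≠ 0) {g : ℂ → E} (hg : Differentiable ℂ g)
    (h1 : Periodic g 1) (hτg : Periodic g τ) (z w : ℂ) : g z = g w := by
  set K := (fun st : ℝ × ℝ => (st.1 : ℂ) + st.2 * τ) '' Icc 0 1 ×ˢ Icc 0 1
  have hK : IsCompact K := (isCompact_Icc.prod isCompact_Icc).image (by fun_prop)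
  refine hg.apply_eq_apply_of_bounded ((hK.image hg.continuous).isBounded.subset ?_) z w
  rintro _ ⟨ζ, rfl⟩
  set x := ζ.re - τ.re * ζ.im / τ.im
  set y := ζ.im / τ.im
  have hζ : ζ = (Int.fract x + Int.fract y * τ) + (⌊x⌋ + ⌊y⌋ * τ) := by
    have hxy : ζ = x + y * τ := by
      apply Complex.ext
      · simp [x, y]
        field_simp
        ring
      · simp [y]
        field_simp
    rw [hxy, Int.fract, Int.fract]
    push_cast
    ring
  refine ⟨_, ⟨(Int.fract x, Int.fract y), ⟨?_, ?_⟩, rfl⟩, ?_⟩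
  · exact Ico_subset_Icc_self ⟨Int.fract_nonneg x, Int.fract_lt_one x⟩
  · exact Ico_subset_Icc_self ⟨Int.fract_nonneg y, Int.fract_lt_one y⟩
  · rw [hζ, h1.of_mem_lattice hτg ⟨⌊x⌋, ⌊y⌋, rfl⟩]

end Lattice

section RemovableSingularity

variable {𝕜 E : Type*} [NontriviallyNormedField 𝕜] [NormedAddCommGroup E]

def HasRemovableSingularityAt [NormedSpace 𝕜 E] (G : 𝕜 → E) (z : 𝕜) : Prop :=
  ∃ H : 𝕜 → E, AnalyticAt 𝕜 H z ∧ G =ᶠ[𝓝[≠] z] H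

theorem Function.Periodic.hasRemovableSingularityAt_add [NormedSpace 𝕜 E] {G : 𝕜 → E} {ω p : 𝕜}
    (hG : Periodic G ω) (h : HasRemovableSingularityAt G p) :
    HasRemovableSingularityAt G (p + ω) := by
  obtain ⟨H, hH, hGH⟩ := h
  refine ⟨fun x => H (x - ω), ?_, ?_⟩
  · have hH' : AnalyticAt 𝕜 H ((· - ω) (p + ω)) := by simpa using hH
    exact hH'.comp (f := (· - ω)) (by fun_prop)
  · have hmap : Tendsto (· - ω) (𝓝[≠] (p + ω)) (𝓝[≠] p) := by
      have := (map_subRight_nhdsNE (c := ω) (a := p + ω)).le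
      rwa [add_sub_cancel_right] at this
    filter_upwards [hmap.eventually hGH] with x hx
    rw [← hx, hG.sub_eq]

theorem limUnder_nhdsNE_eq {G H : 𝕜 → E} {z : 𝕜} (hGH : G =ᶠ[𝓝[≠] z] H)
    (hH : ContinuousAt H z) : limUnder (𝓝[≠] z) G = H z :=
  ((hH.tendsto.mono_left nhdsWithin_le_nhds).congr' hGH.symm).limUnder_eq

theorem differentiable_limUnder_nhdsNE [NormedSpace 𝕜 E] [CompleteSpace E] {G : 𝕜 → E}
    (h : ∀ z, HasRemovableSingularityAt G z) :
    Differentiable 𝕜 fun z => limUnder (𝓝[≠] z) G := by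
  intro z
  obtain ⟨H, hH, hGH⟩ := h z
  refine hH.differentiableAt.congr_of_eventuallyEq ?_
  filter_upwards [hH.eventually_analyticAt,
    (eventually_nhdsWithin_iff.mp hGH).eventually_nhds] with w hHw hGHw
  refine limUnder_nhdsNE_eq ?_ hHw.continuousAt
  rcases eq_or_ne w z with rfl | hwz
  · exact hGH
  · exact nhdsWithin_le_nhds ((hGHw.and (eventually_ne_nhds hwz)).mono fun y hy => hy.1 hy.2)

theorem Function.Periodic.limUnder_nhdsNE {G : 𝕜 → E} {c : 𝕜} (hG : Periodic G c) :
    Periodic (fun z => limUnder (𝓝[≠] z) G) c := by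
  intro z
  simp only [limUnder]
  rw [← map_add_right_nhdsNE, map_map, show G ∘ (· + c) = G from funext hG]

end RemovableSingularity

theorem hasRemovableSingularityAt_div {f g : ℂ → ℂ} {p : ℂ} (hf : Differentiable ℂ f)
    (hg : Differentiable ℂ g) (hfp : f p = 0) (hgp : g p = 0) (hg' : deriv g p ≠ 0) :
    HasRemovableSingularityAt (f / g) p := by
  have hdslope {h : ℂ → ℂ} (hh : Differentiable ℂ h) : Differentiable ℂ (dslope h p) :=
    differentiableOn_univ.mp ((differentiableOn_dslope univ_mem).mpr hh.differentiableOn)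
  have hsub {h : ℂ → ℂ} (hhp : h p = 0) (z : ℂ) : h z = (z - p) * dslope h p z := by
    simpa [hhp] using (sub_smul_dslope h p z).symm
  refine ⟨dslope f p / dslope g p, ((hdslope hf).analyticAt p).div ((hdslope hg).analyticAt p)
    (by rwa [dslope_same]), ?_⟩
  filter_upwards [self_mem_nhdsWithin] with z hz
  rw [Pi.div_apply, Pi.div_apply, hsub hfp, hsub hgp, mul_div_mul_left _ _ (sub_ne_zero.mpr hz)]

section Theta

variable {τ : ℂ} {ϑ : ℂ → ℂ}

def thetaProd (ϑ : ℂ → ℂ) (α β z : ℂ) : ℂ := ϑ (z - α) * ϑ (z - β)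

def thetaProdFactor (τ s z : ℂ) : ℂ :=
  cexp (-2 * π * I * τ) * cexp (-2 * π * I * (2 * z - s))

theorem thetaProdFactor_ne_zero (τ s z : ℂ) : thetaProdFactor τ s z ≠ 0 :=
  mul_ne_zero (exp_ne_zero _) (exp_ne_zero _)

theorem thetaProd_comm (ϑ : ℂ → ℂ) (α β : ℂ) : thetaProd ϑ α β = thetaProd ϑ β α :=
  funext fun _ => mul_comm _ _

theorem Differentiable.thetaProd (hϑ : Differentiable ℂ ϑ) (α β : ℂ) :
    Differentiable ℂ (thetaProd ϑ α β) := by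
  unfold _root_.thetaProd
  fun_prop

theorem periodic_thetaProd (hϑ_per1 : ∀ z, ϑ (z + 1) = -ϑ z) (α β : ℂ) :
    Periodic (thetaProd ϑ α β) 1 := by
  intro z
  rw [thetaProd, thetaProd, add_sub_right_comm z 1 α, add_sub_right_comm z 1 β, hϑ_per1, hϑ_per1,
    neg_mul_neg]

theorem thetaProd_add_tau
    (hϑ_perτ : ∀ z, ϑ (z + τ) = -cexp (-π * I * τ) * cexp (-2 * π * I * z) * ϑ z)
    {α β s : ℂ} (hs : α + β = s) (z : ℂ) :
    thetaProd ϑ α β (z + τ) = thetaProdFactor τ s z * thetaProd ϑ α β z := by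
  have hfactor : cexp (-π * I * τ) * cexp (-π * I * τ) *
      (cexp (-2 * π * I * (z - α)) * cexp (-2 * π * I * (z - β))) = thetaProdFactor τ s z := by
    rw [thetaProdFactor, ← exp_add, ← exp_add, ← exp_add, ← exp_add, ← hs]
    ring_nf
  rw [thetaProd, thetaProd, add_sub_right_comm z τ α, add_sub_right_comm z τ β, hϑ_perτ, hϑ_perτ,
    ← hfactor]
  ring

theorem hasDerivAt_thetaProd (hϑ : Differentiable ℂ ϑ) (hϑ0 : ϑ 0 = 0) (α β : ℂ) :
    HasDerivAt (thetaProd ϑ α β) (deriv ϑ 0 * ϑ (α - β)) α := by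
  have hα : HasDerivAt (fun z => ϑ (z - α)) (deriv ϑ 0) α :=
    HasDerivAt.comp_sub_const α α (by rw [sub_self]; exact (hϑ 0).hasDerivAt)
  have hβ := HasDerivAt.comp_sub_const α β (hϑ (α - β)).hasDerivAt
  have h := hα.mul hβ
  rwa [sub_self, hϑ0, zero_mul, add_zero] at h

theorem hasRemovableSingularityAt_div_thetaProd (hϑ : Differentiable ℂ ϑ) (hϑ0 : ϑ 0 = 0)
    (hϑ' : deriv ϑ 0 ≠ 0) {f : ℂ → ℂ} (hf : Differentiable ℂ f) {α β : ℂ} (hfα : f α = 0)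
    (hαβ : ϑ (α - β) ≠ 0) : HasRemovableSingularityAt (f / thetaProd ϑ α β) α :=
  hasRemovableSingularityAt_div hf (hϑ.thetaProd α β) hfα (by simp [thetaProd, hϑ0])
    (by rw [(hasDerivAt_thetaProd hϑ hϑ0 α β).deriv]; exact mul_ne_zero hϑ' hαβ)

theorem exists_eq_smul_thetaProd (hτ : τ.im ≠ 0) (hϑ : Differentiable ℂ ϑ)
    (hϑ_zero : ∀ z, ϑ z = 0 ↔ z ∈ lattice τ) (hϑ' : deriv ϑ 0 ≠ 0)
    (hϑ_per1 : ∀ z, ϑ (z + 1) = -ϑ z)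
    (hϑ_perτ : ∀ z, ϑ (z + τ) = -cexp (-π * I * τ) * cexp (-2 * π * I * z) * ϑ z)
    {f : ℂ → ℂ} {p q : ℂ} (hf : Differentiable ℂ f) (hf1 : Periodic f 1)
    (hfτ : ∀ z, f (z + τ) = thetaProdFactor τ (p + q) z * f z)
    (hfp : f p = 0) (hfq : f q = 0) (hpq : p - q ∉ lattice τ) :
    ∃ κ : ℂ, f = κ • thetaProd ϑ p q := by
  have hϑ0 : ϑ 0 = 0 := (hϑ_zero 0).2 ⟨0, 0, by simp⟩
  have hD := hϑ.thetaProd p q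
  set G := f / thetaProd ϑ p q
  have hG1 : Periodic G 1 := fun z => by
    simp only [G, Pi.div_apply, hf1 z, periodic_thetaProd hϑ_per1 p q z]
  have hGτ : Periodic G τ := fun z => by
    simp only [G, Pi.div_apply, hfτ, thetaProd_add_tau hϑ_perτ rfl]
    exact mul_div_mul_left _ _ (thetaProdFactor_ne_zero _ _ _)
  have hGp : HasRemovableSingularityAt G p :=
    hasRemovableSingularityAt_div_thetaProd hϑ hϑ0 hϑ' hf hfp ((hϑ_zero _).not.2 hpq)
  have hGq : HasRemovableSingularityAt G q := by
    rw [show G = f / thetaProd ϑ q p by rw [thetaProd_comm]]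
    refine hasRemovableSingularityAt_div_thetaProd hϑ hϑ0 hϑ' hf hfq ((hϑ_zero _).not.2 ?_)
    exact fun h => hpq (by simpa using neg_mem_lattice h)
  have hG : ∀ z, HasRemovableSingularityAt G z := by
    intro z
    by_cases hz : thetaProd ϑ p q z = 0
    · rcases mul_eq_zero.1 hz with h | h
      · simpa using (hG1.of_mem_lattice hGτ ((hϑ_zero _).1 h)).hasRemovableSingularityAt_add hGp
      · simpa using (hG1.of_mem_lattice hGτ ((hϑ_zero _).1 h)).hasRemovableSingularityAt_add hGq
    · exact ⟨G, (hf.analyticAt z).div (hD.analyticAt z) hz, .rfl⟩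
  have hconst := (differentiable_limUnder_nhdsNE hG).apply_eq_apply_of_periodic hτ
    hG1.limUnder_nhdsNE hGτ.limUnder_nhdsNE
  have hzeros : {z | thetaProd ϑ p q z = 0}.Countable :=
    ((countable_lattice.preimage (sub_left_injective (b := p))).union
      (countable_lattice.preimage (sub_left_injective (b := q)))).mono
      fun z hz => (mul_eq_zero.1 hz).imp (hϑ_zero _).1 (hϑ_zero _).1
  refine ⟨limUnder (𝓝[≠] 0) G, Continuous.ext_on (hzeros.dense_compl ℂ) hf.continuous
    (continuous_const.smul hD.continuous) fun z hz => ?_⟩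
  have hGz : ContinuousAt G z := ((hf.analyticAt z).div (hD.analyticAt z) hz).continuousAt
  rw [Pi.smul_apply, smul_eq_mul, ← hconst z, limUnder_nhdsNE_eq .rfl hGz]
  exact (div_mul_cancel₀ _ hz).symm

end Theta

theorem theta_eq_neg_of_add_eq_zero {ϑ : ℂ → ℂ} (hϑ_odd : ∀ z, ϑ (-z) = -ϑ z) {x y : ℂ}
    (h : x + y = 0) : ϑ x = -ϑ y := by
  rw [eq_neg_of_add_eq_zero_left h, hϑ_odd]

section ThreeTerm

variable {τ : ℂ} {ϑ : ℂ → ℂ} {v a b lam : ℂ}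

def thetaThreeTerm (ϑ : ℂ → ℂ) (v a b lam u : ℂ) : ℂ :=
  ϑ (v - a + lam) * ϑ (2 * lam) * thetaProd ϑ (v + a - b) (b - lam) u
    - ϑ (v - b) * ϑ (a - b + lam) * thetaProd ϑ (v + lam) (a - 2 * lam) u
    + ϑ (v - b + 2 * lam) * ϑ (a - b - lam) * thetaProd ϑ (v - lam) a u

theorem thetaThreeTerm_apply (u : ℂ) : thetaThreeTerm ϑ v a b lam u =
    ϑ (u - v - a + b) * ϑ (u - b + lam) * ϑ (v - a + lam) * ϑ (2 * lam)
      - ϑ (u - v - lam) * ϑ (u - a + 2 * lam) * ϑ (v - b) * ϑ (a - b + lam)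
      + ϑ (u - v + lam) * ϑ (u - a) * ϑ (v - b + 2 * lam) * ϑ (a - b - lam) := by
  rw [thetaThreeTerm, thetaProd, thetaProd, thetaProd, show u - (v + a - b) = u - v - a + b by ring,
    show u - (b - lam) = u - b + lam by ring, show u - (v + lam) = u - v - lam by ring,
    show u - (a - 2 * lam) = u - a + 2 * lam by ring, show u - (v - lam) = u - v + lam by ring]
  ring

theorem Differentiable.thetaThreeTerm (hϑ : Differentiable ℂ ϑ) :
    Differentiable ℂ (thetaThreeTerm ϑ v a b lam) := by
  unfold _root_.thetaThreeTerm _root_.thetaProd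
  fun_prop

theorem periodic_thetaThreeTerm (hϑ_per1 : ∀ z, ϑ (z + 1) = -ϑ z) :
    Periodic (thetaThreeTerm ϑ v a b lam) 1 := by
  intro z
  simp only [thetaThreeTerm, periodic_thetaProd hϑ_per1 _ _ z]

theorem thetaThreeTerm_add_tau
    (hϑ_perτ : ∀ z, ϑ (z + τ) = -cexp (-π * I * τ) * cexp (-2 * π * I * z) * ϑ z) (z : ℂ) :
    thetaThreeTerm ϑ v a b lam (z + τ) =
      thetaProdFactor τ (v + lam + (a - 2 * lam)) z * thetaThreeTerm ϑ v a b lam z := by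
  rw [thetaThreeTerm, thetaThreeTerm,
    thetaProd_add_tau hϑ_perτ (show v + a - b + (b - lam) = v + lam + (a - 2 * lam) by ring),
    thetaProd_add_tau hϑ_perτ rfl,
    thetaProd_add_tau hϑ_perτ (show v - lam + a = v + lam + (a - 2 * lam) by ring)]
  ring

theorem thetaThreeTerm_v_add_lam (hϑ0 : ϑ 0 = 0) (hϑ_odd : ∀ z, ϑ (-z) = -ϑ z) :
    thetaThreeTerm ϑ v a b lam (v + lam) = 0 := by
  rw [thetaThreeTerm, thetaProd, thetaProd, thetaProd, sub_self, hϑ0,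
    theta_eq_neg_of_add_eq_zero hϑ_odd (x := v + lam - (v + a - b)) (y := a - b - lam) (by ring),
    show v + lam - (b - lam) = v - b + 2 * lam by ring, show v + lam - (v - lam) = 2 * lam by ring,
    show v + lam - a = v - a + lam by ring]
  ring

theorem thetaThreeTerm_a_sub_two_mul_lam (hϑ0 : ϑ 0 = 0) (hϑ_odd : ∀ z, ϑ (-z) = -ϑ z) :
    thetaThreeTerm ϑ v a b lam (a - 2 * lam) = 0 := by
  rw [thetaThreeTerm, thetaProd, thetaProd, thetaProd, sub_self, hϑ0,
    theta_eq_neg_of_add_eq_zero hϑ_odd (x := a - 2 * lam - (v + a - b)) (y := v - b + 2 * lam)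
      (by ring),
    show a - 2 * lam - (b - lam) = a - b - lam by ring,
    theta_eq_neg_of_add_eq_zero hϑ_odd (x := a - 2 * lam - (v - lam)) (y := v - a + lam) (by ring),
    theta_eq_neg_of_add_eq_zero hϑ_odd (x := a - 2 * lam - a) (y := 2 * lam) (by ring)]
  ring

theorem thetaThreeTerm_a (hϑ0 : ϑ 0 = 0) (hϑ_odd : ∀ z, ϑ (-z) = -ϑ z) :
    thetaThreeTerm ϑ v a b lam a = 0 := by
  rw [thetaThreeTerm, thetaProd, thetaProd, thetaProd, sub_self, hϑ0,
    theta_eq_neg_of_add_eq_zero hϑ_odd (x := a - (v + a - b)) (y := v - b) (by ring),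
    show a - (b - lam) = a - b + lam by ring,
    theta_eq_neg_of_add_eq_zero hϑ_odd (x := a - (v + lam)) (y := v - a + lam) (by ring),
    show a - (a - 2 * lam) = 2 * lam by ring]
  ring

theorem thetaThreeTerm_eq_zero (hτ : τ.im ≠ 0) (hϑ : Differentiable ℂ ϑ)
    (hϑ_zero : ∀ z, ϑ z = 0 ↔ z ∈ lattice τ) (hϑ' : deriv ϑ 0 ≠ 0)
    (hϑ_per1 : ∀ z, ϑ (z + 1) = -ϑ z) (hϑ_odd : ∀ z, ϑ (-z) = -ϑ z)
    (hϑ_perτ : ∀ z, ϑ (z + τ) = -cexp (-π * I * τ) * cexp (-2 * π * I * z) * ϑ z)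
    (h2lam : 2 * lam ∉ lattice τ) (hav : a - v - lam ∉ lattice τ)
    (hva : v - a + 3 * lam ∉ lattice τ) : thetaThreeTerm ϑ v a b lam = 0 := by
  have hϑ0 : ϑ 0 = 0 := (hϑ_zero 0).2 ⟨0, 0, by simp⟩
  obtain ⟨κ, hκ⟩ := exists_eq_smul_thetaProd (f := thetaThreeTerm ϑ v a b lam) hτ hϑ hϑ_zero hϑ'
    hϑ_per1 hϑ_perτ hϑ.thetaThreeTerm (periodic_thetaThreeTerm hϑ_per1)
    (thetaThreeTerm_add_tau hϑ_perτ)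
    (thetaThreeTerm_v_add_lam hϑ0 hϑ_odd) (thetaThreeTerm_a_sub_two_mul_lam hϑ0 hϑ_odd)
    (by rwa [show v + lam - (a - 2 * lam) = v - a + 3 * lam by ring])
  have hDa : thetaProd ϑ (v + lam) (a - 2 * lam) a ≠ 0 := by
    rw [thetaProd, show a - (v + lam) = a - v - lam by ring,
      show a - (a - 2 * lam) = 2 * lam by ring]
    exact mul_ne_zero ((hϑ_zero _).not.2 hav) ((hϑ_zero _).not.2 h2lam)
  have hκ0 : κ = 0 := by
    simpa [hDa] using (congrFun hκ a).symm.trans (thetaThreeTerm_a hϑ0 hϑ_odd)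
  rw [hκ, hκ0, zero_smul]

end ThreeTerm

/-- Final three-term theta vanishing identity concluding the proof of the
Gautam–Toledano Laredo symmetry lemma. -/
theorem three_term_theta_vanishing
    (τ : ℂ) (hτ : 0 < τ.im)
    (ϑ : ℂ → ℂ)
    (hϑ_hol : Differentiable ℂ ϑ)
    (hϑ_zero : ∀ z : ℂ, ϑ z = 0 ↔ z ∈ lattice τ)
    (hϑ_deriv : deriv ϑ 0 = 1)
    (hϑ_per1 : ∀ z : ℂ, ϑ (z + 1) = -ϑ z)
    (hϑ_odd : ∀ z : ℂ, ϑ (-z) = -ϑ z)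
    (hϑ_perτ : ∀ z : ℂ, ϑ (z + τ) =
      -Complex.exp (-(Real.pi : ℂ) * Complex.I * τ) *
        Complex.exp (-2 * (Real.pi : ℂ) * Complex.I * z) * ϑ z)
    (u v a b lam : ℂ) :
    ϑ (u - v - a + b) * ϑ (u - b + lam) * ϑ (v - a + lam) * ϑ (2 * lam)
      - ϑ (u - v - lam) * ϑ (u - a + 2 * lam) * ϑ (v - b) * ϑ (a - b + lam)
      + ϑ (u - v + lam) * ϑ (u - a) * ϑ (v - b + 2 * lam) * ϑ (a - b - lam) = 0 := by
  have hexceptional : ({l | 2 * l ∈ lattice τ} ∪ {l | a - v - l ∈ lattice τ}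
      ∪ {l | v - a + 3 * l ∈ lattice τ}).Countable :=
    ((countable_lattice.preimage (mul_right_injective₀ two_ne_zero)).union
      (countable_lattice.preimage (sub_right_injective (b := a - v)))).union
      (countable_lattice.preimage
        ((add_right_injective (v - a)).comp (mul_right_injective₀ three_ne_zero)))
  have hϑc := hϑ_hol.continuous
  have h : (fun l => thetaThreeTerm ϑ v a b l u) = 0 := by
    refine Continuous.ext_on (hexceptional.dense_compl ℂ)
      (by unfold thetaThreeTerm thetaProd; fun_prop) continuous_const fun l hl => ?_
    simp only [mem_compl_iff, mem_union, not_or] at hl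
    exact congrFun (thetaThreeTerm_eq_zero hτ.ne' hϑ_hol hϑ_zero
      (by rw [hϑ_deriv]; exact one_ne_zero) hϑ_per1 hϑ_odd hϑ_perτ hl.1.1 hl.1.2 hl.2) u
  rw [← thetaThreeTerm_apply]
  exact congrFun h lam
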